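/- arXiv:1808.08494 — 9 statements merged into one kernel-verified Lean document; each statement's English description precedes it below -/
import Mathlib

section
/- Let G be a connected undirected graph and S, T nonempty sets of vertices, with D_{S,T} = max_{s∈S, t∈T} d(s,t). For any fixed s ∈ S and t ∈ T, max{ max_{t'∈T} d(s,t'), max_{s'∈S} d(s',t) } ≥ D_{S,T}/3. -/
open Finset

/-!
For `s₀ ∈ S` and `t₀ ∈ T`, the detour `s₀ → t → s → t₀` gives
`d(s₀, t₀) ≤ d(s₀, t) + d(t, s) + d(s, t₀)`, and each of the three terms is bounded by one of the
two eccentricities `max_{s'∈S} d(s', t)` and `max_{t'∈T} d(s, t')` (the middle one because `t ∈ T`).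
-/

section SymmetricTriangle

variable {α : Type*} (d : α → α → ℕ) (d_comm : ∀ x y, d x y = d y x)
  (d_triangle : ∀ x y z, d x z ≤ d x y + d y z)
include d_comm d_triangle

theorem le_sup_add_two_mul_sup {S T : Finset α} {s t s₀ t₀ : α} (ht : t ∈ T)
    (hs₀ : s₀ ∈ S) (ht₀ : t₀ ∈ T) :
    d s₀ t₀ ≤ S.sup (d · t) + 2 * T.sup (d s) := by
  have hs₀t : d s₀ t ≤ S.sup (d · t) := le_sup (f := (d · t)) hs₀
  have hts : d t s ≤ T.sup (d s) := d_comm t s ▸ le_sup ht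
  have hst₀ : d s t₀ ≤ T.sup (d s) := le_sup ht₀
  calc d s₀ t₀ ≤ d s₀ t + (d t s + d s t₀) :=
        (d_triangle _ t _).trans (Nat.add_le_add_left (d_triangle _ s _) _)
    _ ≤ S.sup (d · t) + 2 * T.sup (d s) := by omega

theorem sup_product_le_three_mul_max {S T : Finset α} {s t : α} (ht : t ∈ T) :
    (S ×ˢ T).sup (fun p => d p.1 p.2) ≤ 3 * max (T.sup (d s)) (S.sup (d · t)) := by
  refine Finset.sup_le fun p hp => ?_
  have hp' := mem_product.mp hp
  have := le_sup_add_two_mul_sup d d_comm d_triangle (s := s) ht hp'.1 hp'.2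
  have := le_max_left (T.sup (d s)) (S.sup (d · t))
  have := le_max_right (T.sup (d s)) (S.sup (d · t))
  omega

end SymmetricTriangle

theorem stmt_1_general {V : Type*} (G : SimpleGraph V)
    (hconn : G.Connected) (S T : Finset V)
    (s : V) (t : V) (ht : t ∈ T) :
    (((S ×ˢ T).sup fun p => G.dist p.1 p.2 : ℕ) : ℚ) / 3 ≤
      max ((T.sup fun t' => G.dist s t' : ℕ) : ℚ)
          ((S.sup fun s' => G.dist s' t : ℕ) : ℚ) := by
  have key := sup_product_le_three_mul_max G.dist (fun _ _ => G.dist_comm)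
    (fun _ _ _ => hconn.dist_triangle) (S := S) (s := s) ht
  rw [div_le_iff₀ three_pos]
  exact_mod_cast (key.trans_eq (mul_comm _ _))

/-- For a connected undirected graph `G` and nonempty vertex sets `S`, `T`, with
`D_{S,T} = max_{s∈S,t∈T} d(s,t)`: for any fixed `s ∈ S` and `t ∈ T`,
`max{max_{t'∈T} d(s,t'), max_{s'∈S} d(s',t)} ≥ D_{S,T}/3`. -/
theorem stmt_1 {V : Type*} [Fintype V] [DecidableEq V] (G : SimpleGraph V)
    (hconn : G.Connected) (S T : Finset V) (hS : S.Nonempty) (hT : T.Nonempty)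
    (s : V) (hs : s ∈ S) (t : V) (ht : t ∈ T) :
    (((S ×ˢ T).sup fun p => G.dist p.1 p.2 : ℕ) : ℚ) / 3 ≤
      max ((T.sup fun t' => G.dist s t' : ℕ) : ℚ)
          ((S.sup fun s' => G.dist s' t : ℕ) : ℚ) :=
  stmt_1_general G hconn S T s t ht
end

section
/- Let G be a strongly connected directed unweighted graph with diameter D = 2h. Let v be any vertex, and suppose we know the in- and out-eccentricities of v and of every in- and out-neighbor of v. Then max over w ∈ N(v) ∪ {v} of max(ε_in(w), ε_out(w)) is at least h+1 and at most 2h. -/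
/-!
If `d(a, b) = 2h`, then for every vertex `v` the triangle inequality gives
`d(a, v) + d(v, b) ≥ 2h`, so either one of these summands exceeds `h` (and `v` itself has
eccentricity at least `h + 1`), or `d(a, v) = h ≥ 1`. In the latter case the in-neighbour `c`
of `v` on a shortest `a`–`v` path has `d(a, c) ≤ h - 1`, hence `d(c, b) ≥ h + 1`.
The upper bound is immediate from the diameter.
-/

open Finset

/-- Shortest-path distance in a directed graph (quiver): the least length of a
directed path from `u` to `v`. -/
noncomputable def ddist {V : Type*} [Quiver V] (u v : V) : ℕ :=
  sInf {n | ∃ p : Quiver.Path u v, p.length = n}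

section Quiver

variable {V : Type*} [Quiver V]

lemma ddist_le_length {u v : V} (p : Quiver.Path u v) : ddist u v ≤ p.length :=
  Nat.sInf_le ⟨p, rfl⟩

lemma exists_path_length_eq_ddist {u v : V} (hne : Nonempty (Quiver.Path u v)) :
    ∃ p : Quiver.Path u v, p.length = ddist u v :=
  Nat.sInf_mem (s := {n | ∃ p : Quiver.Path u v, p.length = n})
    ⟨hne.some.length, hne.some, rfl⟩

lemma ddist_triangle {a c b : V} (hac : Nonempty (Quiver.Path a c))
    (hcb : Nonempty (Quiver.Path c b)) : ddist a b ≤ ddist a c + ddist c b := by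
  obtain ⟨p, hp⟩ := exists_path_length_eq_ddist hac
  obtain ⟨q, hq⟩ := exists_path_length_eq_ddist hcb
  calc ddist a b ≤ (p.comp q).length := ddist_le_length _
    _ = ddist a c + ddist c b := by rw [Quiver.Path.length_comp, hp, hq]

lemma exists_hom_ddist_add_one_le {a v : V} (hav : Nonempty (Quiver.Path a v))
    (hpos : 0 < ddist a v) : ∃ c, Nonempty (c ⟶ v) ∧ ddist a c + 1 ≤ ddist a v := by
  obtain ⟨p, hp⟩ := exists_path_length_eq_ddist hav
  cases p with
  | nil => simp [← hp] at hpos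
  | cons q e =>
    refine ⟨_, ⟨e⟩, ?_⟩
    rw [← hp, Quiver.Path.length_cons]
    exact Nat.succ_le_succ (ddist_le_length q)

variable [Fintype V]

/-- `max (ε_in w) (ε_out w)`. -/
noncomputable def ecc (w : V) : ℕ :=
  max (univ.sup fun u => ddist u w) (univ.sup fun u => ddist w u)

lemma ddist_le_ecc_left (u w : V) : ddist u w ≤ ecc w :=
  le_max_of_le_left (le_sup (f := fun u => ddist u w) (mem_univ u))

lemma ddist_le_ecc_right (w u : V) : ddist w u ≤ ecc w :=
  le_max_of_le_right (le_sup (f := fun u => ddist w u) (mem_univ u))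

lemma ecc_le {k : ℕ} (hk : ∀ a b : V, ddist a b ≤ k) (w : V) : ecc w ≤ k :=
  max_le (Finset.sup_le fun u _ => hk u w) (Finset.sup_le fun u _ => hk w u)

lemma exists_adj_or_eq_add_one_le_ecc (hsc : ∀ u v : V, Nonempty (Quiver.Path u v))
    {h : ℕ} (hh : 1 ≤ h) {a b : V} (hab : 2 * h ≤ ddist a b) (v : V) :
    ∃ w : V, (w = v ∨ Nonempty (v ⟶ w) ∨ Nonempty (w ⟶ v)) ∧ h + 1 ≤ ecc w := by
  have hvia_v := ddist_triangle (hsc a v) (hsc v b)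
  by_cases hvb : h + 1 ≤ ddist v b
  · exact ⟨v, .inl rfl, hvb.trans (ddist_le_ecc_right v b)⟩
  by_cases hav : h + 1 ≤ ddist a v
  · exact ⟨v, .inl rfl, hav.trans (ddist_le_ecc_left a v)⟩
  obtain ⟨c, hcv, hac⟩ := exists_hom_ddist_add_one_le (hsc a v) (by omega)
  have hvia_c := ddist_triangle (hsc a c) (hsc c b)
  exact ⟨c, .inr (.inr hcv), (show h + 1 ≤ ddist c b by omega).trans (ddist_le_ecc_right c b)⟩

end Quiver

/-- In a strongly connected directed unweighted graph of diameter `D = 2h`,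
for any vertex `v`, the maximum over `w ∈ N(v) ∪ {v}` of
`max(ε_in(w), ε_out(w))` is at least `h+1` and at most `2h`. -/
theorem stmt_5 {V : Type*} [Fintype V] [Quiver V]
    (hsc : ∀ u v : V, Nonempty (Quiver.Path u v))
    (h : ℕ) (hh : 1 ≤ h)
    (hub : ∀ a b : V, ddist a b ≤ 2 * h)
    (hlb : ∃ a b : V, ddist a b = 2 * h)
    (v : V) :
    (∃ w : V, (w = v ∨ Nonempty (v ⟶ w) ∨ Nonempty (w ⟶ v)) ∧
        h + 1 ≤ max (univ.sup fun u => ddist u w) (univ.sup fun u => ddist w u)) ∧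
    (∀ w : V, (w = v ∨ Nonempty (v ⟶ w) ∨ Nonempty (w ⟶ v)) →
        max (univ.sup fun u => ddist u w) (univ.sup fun u => ddist w u) ≤ 2 * h) := by
  obtain ⟨a, b, hab⟩ := hlb
  exact ⟨exists_adj_or_eq_add_one_le_ecc hsc hh hab.ge v, fun w _ => ecc_le hub w⟩
end

section
/- Let G be an undirected graph, A ⊆ V a nonempty set, and for each u define the bunch B_A(u) = {x : d(u,x) < d(u,A)} where d(u,A) = min_{a∈A} d(u,a). If u, v are vertices with B_A(u) ∩ B_A(v) ≠ ∅ and v ∉ B_A(u), then there exists a vertex w on some shortest path from u to v with w ∈ B_A(u) ∩ B_A(v). -/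
/-! Take `w` to be the vertex at distance `d(u,x)` from `u` on a shortest `u`–`v` path, where
`x` is a common vertex of the two bunches; since `v ∉ B_A(u)`, this index does not exceed
`d(u,v)`. Then `d(u,w) = d(u,x)`, and `d(v,w) = d(u,v) - d(u,x) ≤ d(x,v)` by the triangle
inequality, so `w` lies in both bunches. -/

namespace SimpleGraph

variable {V : Type*} {G : SimpleGraph V} {u v : V}

theorem Reachable.exists_dist_eq_of_le_dist (h : G.Reachable u v) {k : ℕ} (hk : k ≤ G.dist u v) :
    ∃ w, G.dist u w = k ∧ G.dist w v = G.dist u v - k := by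
  obtain ⟨p, hp⟩ := h.exists_walk_length_eq_dist
  have hfirst : G.dist u (p.getVert k) ≤ k :=
    (dist_le (p.take k)).trans (by simp [Walk.take_length])
  have hrest : G.dist (p.getVert k) v ≤ G.dist u v - k :=
    (dist_le (p.drop k)).trans (by simp [Walk.drop_length, hp])
  have htri : G.dist u v ≤ G.dist u (p.getVert k) + G.dist (p.getVert k) v :=
    (p.take k).reachable.dist_triangle_left v
  exact ⟨p.getVert k, by omega, by omega⟩

end SimpleGraph

/-- Bunch intersection lemma: if `B_A(u) ∩ B_A(v) ≠ ∅` and `v ∉ B_A(u)`, then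
some vertex `w` on a shortest path from `u` to `v` (i.e. with
`d(u,w) + d(w,v) = d(u,v)`) lies in `B_A(u) ∩ B_A(v)`. -/
theorem stmt_6 {V : Type*} (G : SimpleGraph V) (hconn : G.Connected)
    (A : Finset V) (hA : A.Nonempty) (u v : V)
    (hint : ∃ x : V, G.dist u x < A.inf' hA (fun a => G.dist u a) ∧
        G.dist v x < A.inf' hA (fun a => G.dist v a))
    (hv : ¬ G.dist u v < A.inf' hA (fun a => G.dist u a)) :
    ∃ w : V, G.dist u w + G.dist w v = G.dist u v ∧
        G.dist u w < A.inf' hA (fun a => G.dist u a) ∧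
        G.dist v w < A.inf' hA (fun a => G.dist v a) := by
  obtain ⟨x, hxu, hxv⟩ := hint
  obtain ⟨w, huw, hwv⟩ := (hconn u v).exists_dist_eq_of_le_dist (k := G.dist u x) (by omega)
  have htri : G.dist u v ≤ G.dist u x + G.dist x v := hconn.dist_triangle
  have hvw : G.dist v w ≤ G.dist v x := by
    rw [G.dist_comm (u := v), G.dist_comm (u := v)]
    omega
  exact ⟨w, by omega, huw ▸ hxu, hvw.trans_lt hxv⟩
end

section
/- Let G be a directed graph with nonnegative weights, and let S ⊆ V with w ∈ V maximizing d(S,w) := min_{s∈S} d(s,w). Let v be a vertex and suppose d(v,s) < ε(v)/2 for all s ∈ S, where ε(v) = max_u d(v,u). Then d(S,w) > ε(v)/2. -/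
open Finset

lemma half_lt_inf'_of_forall_lt_half {V : Type*} (d : V → V → ℝ)
    (htri : ∀ x y z : V, d x z ≤ d x y + d y z) (S : Finset V) (hS : S.Nonempty) {v u : V}
    (h : ∀ s ∈ S, d v s < d v u / 2) :
    d v u / 2 < S.inf' hS fun s => d s u := by
  refine (lt_inf'_iff hS).2 fun s hs => ?_
  linarith [htri v s u, h s hs]

theorem stmt_10_general {V : Type*} [Fintype V] [Nonempty V]
    (d : V → V → ℝ)
    (htri : ∀ x y z : V, d x z ≤ d x y + d y z)
    (S : Finset V) (hS : S.Nonempty) (w : V)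
    (hw : ∀ x : V, S.inf' hS (fun s => d s x) ≤ S.inf' hS (fun s => d s w))
    (v : V)
    (hv : ∀ s ∈ S, d v s < (univ.sup' univ_nonempty fun u => d v u) / 2) :
    (univ.sup' univ_nonempty fun u => d v u) / 2 < S.inf' hS fun s => d s w := by
  obtain ⟨u, -, hu⟩ := exists_mem_eq_sup' univ_nonempty fun u => d v u
  rw [hu] at hv ⊢
  exact (half_lt_inf'_of_forall_lt_half d htri S hS hv).trans_le (hw u)

/-- Directed weighted graphs: if `w` maximizes `d(S,·)` and `d(v,s) < ε(v)/2`
for all `s ∈ S`, then `d(S,w) > ε(v)/2`. -/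
theorem stmt_10 {V : Type*} [Fintype V] [Nonempty V]
    (d : V → V → ℝ) (hd0 : ∀ x : V, d x x = 0) (hnn : ∀ x y : V, 0 ≤ d x y)
    (htri : ∀ x y z : V, d x z ≤ d x y + d y z)
    (S : Finset V) (hS : S.Nonempty) (w : V)
    (hw : ∀ x : V, S.inf' hS (fun s => d s x) ≤ S.inf' hS (fun s => d s w))
    (v : V)
    (hv : ∀ s ∈ S, d v s < (univ.sup' univ_nonempty fun u => d v u) / 2) :
    (univ.sup' univ_nonempty fun u => d v u) / 2 < S.inf' hS fun s => d s w :=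
  stmt_10_general d htri S hS w hw v hv
end

section
/- Correctness of the 2-approximation step for eccentricities: let G be a strongly connected directed graph, S ⊆ V nonempty, w a vertex maximizing d(S,w), and S' a set of vertices containing all u with d(u,w) ≤ d(S,w) (e.g., S' contains every u with d(u,w) < d(S,w), plus w's closest in-neighborhood intersecting S). Then for every vertex v ∉ S', the value max(max_{s∈S} d(v,s), d(v,w)) is at least ε(v)/2, where ε(v) = max_u d(v,u). -/
open Finset

theorem le_sup'_add_inf' {V : Type*} (d : V → V → ℝ)
    (htri : ∀ x y z : V, d x z ≤ d x y + d y z) (S : Finset V) (hS : S.Nonempty) (v u : V) :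
    d v u ≤ (S.sup' hS fun s => d v s) + S.inf' hS (fun s => d s u) := by
  obtain ⟨s, hs, hsu⟩ := S.exists_mem_eq_inf' hS (fun s => d s u)
  rw [hsu]
  exact (htri v s u).trans (add_le_add_left (S.le_sup' (fun s => d v s) hs) _)

theorem stmt_11_general {V : Type*} [Fintype V] [Nonempty V]
    (d : V → V → ℝ)
    (htri : ∀ x y z : V, d x z ≤ d x y + d y z)
    (S : Finset V) (hS : S.Nonempty) (w : V)
    (hw : ∀ x : V, S.inf' hS (fun s => d s x) ≤ S.inf' hS (fun s => d s w))
    (S' : Set V)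
    (hS' : ∀ u : V, d u w ≤ S.inf' hS (fun s => d s w) → u ∈ S')
    (v : V) (hv : v ∉ S') :
    (univ.sup' univ_nonempty fun u => d v u) / 2 ≤
      max (S.sup' hS fun s => d v s) (d v w) := by
  have hvw : S.inf' hS (fun s => d s w) < d v w := lt_of_not_ge fun h => hv (hS' v h)
  rw [div_le_iff₀ two_pos]
  refine univ.sup'_le _ _ fun u _ => ?_
  calc d v u ≤ (S.sup' hS fun s => d v s) + S.inf' hS (fun s => d s u) :=
        le_sup'_add_inf' d htri S hS v u
    _ ≤ (S.sup' hS fun s => d v s) + d v w := by gcongr; exact (hw u).trans hvw.le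
    _ ≤ max (S.sup' hS fun s => d v s) (d v w) * 2 := by
        rw [mul_two]; exact add_le_add (le_max_left _ _) (le_max_right _ _)

/-- Correctness of the 2-approximation step for eccentricities: if `w`
maximizes `d(S,·)`, `S'` contains every `u` with `d(u,w) ≤ d(S,w)`, and
`v ∉ S'`, then `max(max_{s∈S} d(v,s), d(v,w)) ≥ ε(v)/2`. -/
theorem stmt_11 {V : Type*} [Fintype V] [Nonempty V]
    (d : V → V → ℝ) (hd0 : ∀ x : V, d x x = 0) (hnn : ∀ x y : V, 0 ≤ d x y)
    (htri : ∀ x y z : V, d x z ≤ d x y + d y z)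
    (S : Finset V) (hS : S.Nonempty) (w : V)
    (hw : ∀ x : V, S.inf' hS (fun s => d s x) ≤ S.inf' hS (fun s => d s w))
    (S' : Set V)
    (hS' : ∀ u : V, d u w ≤ S.inf' hS (fun s => d s w) → u ∈ S')
    (v : V) (hv : v ∉ S') :
    (univ.sup' univ_nonempty fun u => d v u) / 2 ≤
      max (S.sup' hS fun s => d v s) (d v w) :=
  stmt_11_general d htri S hS w hw S' hS' v hv
end

section
/- Case analysis in the eccentricity-reduction phase: Let G be a strongly connected directed weighted graph, S ⊆ V, A ⊆ S, D ≥ 0, 0 < τ < 1. Suppose every vertex x ∈ V has A ∩ S_x ≠ ∅, where S_x ⊆ S consists of the |S|/2 vertices of S closest to x under d(·,x). Let w maximize d(A,w). If there exists v ∈ S with ε(v) > (1−τ)D and max_{x∈A} d(v,x) ≤ ((1−τ)/2)·D, then d(S \ S_w, w) ≥ ((1−τ)/2)·D. -/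
open Finset

/-!
If `v` is within `r` of every source in `A` but some `v'` lies farther than `2r` from `v`, the
triangle inequality puts every source farther than `r` from `v'`. Since `w` maximizes the
distance from `A`, the same holds at `w`; and because `A` hits the closest half `S_w`, every
vertex of `S` outside `S_w` is at least as far from `w` as that source.
-/

section

variable {V : Type*} (d : V → V → ℝ)

theorem le_inf'_of_two_mul_lt (htri : ∀ x y z : V, d x z ≤ d x y + d y z)
    {A : Finset V} (hA : A.Nonempty) {v v' : V} {r : ℝ} (hfar : 2 * r < d v v')
    (hclose : ∀ a ∈ A, d v a ≤ r) :
    r ≤ A.inf' hA (fun a => d a v') :=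
  le_inf' hA _ fun a ha => by linarith [htri v a v', hclose a ha]

theorem le_of_mem_sdiff_of_inter_nonempty [DecidableEq V] {S A T : Finset V} (hA : A.Nonempty)
    {w : V} {r : ℝ} (hhalf : ∀ a ∈ T, ∀ b ∈ S \ T, d a w ≤ d b w) (hhit : (A ∩ T).Nonempty)
    (hr : r ≤ A.inf' hA (fun a => d a w)) :
    ∀ y ∈ S \ T, r ≤ d y w := by
  obtain ⟨a, ha⟩ := hhit
  obtain ⟨haA, haT⟩ := mem_inter.mp ha
  exact fun y hy => (hr.trans (inf'_le _ haA)).trans (hhalf _ haT y hy)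

end

theorem stmt_12_general {V : Type*} [Fintype V] [Nonempty V] [DecidableEq V]
    (d : V → V → ℝ)
    (htri : ∀ x y z : V, d x z ≤ d x y + d y z)
    (S A : Finset V) (hA : A.Nonempty)
    (Sx : V → Finset V)
    (hhalf : ∀ x : V, ∀ a ∈ Sx x, ∀ b ∈ S \ Sx x, d a x ≤ d b x)
    (hhit : ∀ x : V, (A ∩ Sx x).Nonempty)
    (D τ : ℝ)
    (w : V)
    (hw : ∀ x : V, A.inf' hA (fun a => d a x) ≤ A.inf' hA (fun a => d a w))
    (v : V)
    (hecc : (1 - τ) * D < univ.sup' univ_nonempty fun u => d v u)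
    (hclose : ∀ x ∈ A, d v x ≤ (1 - τ) / 2 * D) :
    ∀ y ∈ S \ Sx w, (1 - τ) / 2 * D ≤ d y w := by
  obtain ⟨v', -, hfar⟩ := (Finset.lt_sup'_iff _).mp hecc
  have hfar' : 2 * ((1 - τ) / 2 * D) < d v v' := by linarith
  have hfarA := le_inf'_of_two_mul_lt d htri hA hfar' hclose
  exact le_of_mem_sdiff_of_inter_nonempty d hA (hhalf w) (hhit w) (hfarA.trans (hw v'))

/-- Case analysis in the eccentricity-reduction phase: if every vertex `x` has
`A ∩ S_x ≠ ∅` where `S_x` is the closest half of `S` to `x`, `w` maximizes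
`d(A,·)`, and there is `v ∈ S` with `ε(v) > (1−τ)D` and
`max_{x∈A} d(v,x) ≤ ((1−τ)/2)·D`, then `d(S \ S_w, w) ≥ ((1−τ)/2)·D`. -/
theorem stmt_12 {V : Type*} [Fintype V] [Nonempty V] [DecidableEq V]
    (d : V → V → ℝ) (hd0 : ∀ x : V, d x x = 0) (hnn : ∀ x y : V, 0 ≤ d x y)
    (htri : ∀ x y z : V, d x z ≤ d x y + d y z)
    (S A : Finset V) (hA : A.Nonempty) (hAS : A ⊆ S)
    (Sx : V → Finset V) (hSxS : ∀ x : V, Sx x ⊆ S)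
    (hcard : ∀ x : V, (Sx x).card = S.card / 2)
    (hhalf : ∀ x : V, ∀ a ∈ Sx x, ∀ b ∈ S \ Sx x, d a x ≤ d b x)
    (hhit : ∀ x : V, (A ∩ Sx x).Nonempty)
    (D τ : ℝ) (hD : 0 ≤ D) (hτ0 : 0 < τ) (hτ1 : τ < 1)
    (w : V)
    (hw : ∀ x : V, A.inf' hA (fun a => d a x) ≤ A.inf' hA (fun a => d a w))
    (v : V) (hvS : v ∈ S)
    (hecc : (1 - τ) * D < univ.sup' univ_nonempty fun u => d v u)
    (hclose : ∀ x ∈ A, d v x ≤ (1 - τ) / 2 * D) :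
    ∀ y ∈ S \ Sx w, (1 - τ) / 2 * D ≤ d y w :=
  stmt_12_general d htri S A hA Sx hhalf hhit D τ w hw v hecc hclose
end

section
/- In the directed eccentricity lower bound graph, if vertex u ∈ U is not orthogonal to any v ∈ V (i.e., for every v there is a coordinate c with u[c]=v[c]=1), then the out-eccentricity of u is exactly L+2; if u is orthogonal to some v ∈ V, then the out-eccentricity of u is at least 2L+3. -/
open scoped ENNReal

/-- `hasWalk E n a b`: there is a directed walk of length `n` from `a` to `b`
along the relation `E`. -/
def hasWalk {α : Type*} (E : α → α → Prop) : ℕ → α → α → Prop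
  | 0, a, b => a = b
  | n + 1, a, b => ∃ c, E a c ∧ hasWalk E n c b

/-- Directed shortest-path distance (`⊤` if unreachable). -/
noncomputable def dedist {α : Type*} (E : α → α → Prop) (a b : α) : ℕ∞ :=
  ⨅ (n : ℕ) (_ : hasWalk E n a b), (n : ℕ∞)

/-- Vertices of the directed eccentricity lower-bound graph: a vertex for each
`u ∈ U`, a vertex for each coordinate `c ∈ [d]`, a path `v_0 → ⋯ → v_L` for
each `v ∈ V`, and an extra path `x_1 → ⋯ → x_L`. -/
abbrev EccVert (d L : ℕ) (U V : Finset (Fin d → Bool)) : Type :=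
  {u // u ∈ U} ⊕ Fin d ⊕ ({v // v ∈ V} × Fin (L + 1)) ⊕ Fin L

/-- Directed edges: `(u, x_1)` and `(x_L, u)` for all `u ∈ U`; `x_i → x_{i+1}`;
`(u, c)` when `u[c] = 1`; `(c, v_0)` when `v[c] = 1`; and `v_i → v_{i+1}`. -/
def EccEdge (d L : ℕ) (U V : Finset (Fin d → Bool)) :
    EccVert d L U V → EccVert d L U V → Prop := fun a b =>
  match a, b with
  | .inl u, .inr (.inl c) => u.1 c = true
  | .inr (.inl c), .inr (.inr (.inl (v, i))) => v.1 c = true ∧ (i : ℕ) = 0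
  | .inr (.inr (.inl (v, i))), .inr (.inr (.inl (v', j))) =>
      v = v' ∧ (j : ℕ) = (i : ℕ) + 1
  | .inl _, .inr (.inr (.inr x)) => (x : ℕ) = 0
  | .inr (.inr (.inr x)), .inr (.inr (.inr y)) => (y : ℕ) = (x : ℕ) + 1
  | .inr (.inr (.inr x)), .inl _ => (x : ℕ) = L - 1
  | _, _ => False

/-!
Through the path `x`, which leads back into all of `U`, every vertex of `U` is within `L + 1`
steps of `u`, and every coordinate within `L + 2`. When `u` meets every `v ∈ V`, each path
`v_0 → ⋯ → v_L` is entered directly through a common coordinate, so nothing is farther than `L + 2`.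

Lower bounds come from potentials `φ` that grow by at most one along each edge, since these bound
`dist(a, b) ≥ φ b - φ a`. Counting layers `U, [d], v_0, …, v_L` gives `L + 2` for `v_L`. If `u` is
orthogonal to `v`, a walk to `v_0` must first return to `U` through the whole `x`-path, and a
potential recording this puts `v_L` at distance at least `(L + 1) + 2 + L`.
-/

section Walks

variable {α : Type*} {E : α → α → Prop}

theorem hasWalk_one {a b : α} (h : E a b) : hasWalk E 1 a b := ⟨b, h, rfl⟩

theorem hasWalk_add {m n : ℕ} {a b c : α} (h₁ : hasWalk E m a b) (h₂ : hasWalk E n b c) :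
    hasWalk E (m + n) a c := by
  induction m generalizing a with
  | zero => cases h₁; simpa using h₂
  | succ m ih =>
    obtain ⟨a', ha, hw⟩ := h₁
    rw [Nat.succ_add]
    exact ⟨a', ha, ih hw⟩

theorem le_add_of_hasWalk {φ : α → ℕ} (hφ : ∀ a b, E a b → φ b ≤ φ a + 1) {n : ℕ} {a b : α}
    (h : hasWalk E n a b) : φ b ≤ φ a + n := by
  induction n generalizing a with
  | zero => cases h; simp
  | succ n ih =>
    obtain ⟨a', ha, hw⟩ := h
    have := ih hw
    have := hφ a a' ha
    omega

theorem dedist_le_of_hasWalk {n : ℕ} {a b : α} (h : hasWalk E n a b) : dedist E a b ≤ n :=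
  iInf₂_le n h

theorem le_dedist_of_potential {φ : α → ℕ} (hφ : ∀ a b, E a b → φ b ≤ φ a + 1) (a b : α) :
    ((φ b - φ a : ℕ) : ℕ∞) ≤ dedist E a b :=
  le_iInf₂ fun n hn => by
    have := le_add_of_hasWalk hφ hn
    exact_mod_cast (by omega : φ b - φ a ≤ n)

noncomputable def outEcc (E : α → α → Prop) (a : α) : ℕ∞ :=
  ⨆ b, dedist E a b

theorem outEcc_le_of_forall_hasWalk {a : α} {k : ℕ} (h : ∀ b, ∃ n ≤ k, hasWalk E n a b) :
    outEcc E a ≤ k :=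
  iSup_le fun b => by
    obtain ⟨n, hn, hw⟩ := h b
    exact (dedist_le_of_hasWalk hw).trans (by exact_mod_cast hn)

theorem dedist_le_outEcc (a b : α) : dedist E a b ≤ outEcc E a :=
  le_iSup (dedist E a) b

end Walks

namespace EccVert

variable {d L : ℕ} {U V : Finset (Fin d → Bool)}

abbrev ofU (u : {u // u ∈ U}) : EccVert d L U V := .inl u

abbrev coord (c : Fin d) : EccVert d L U V := .inr (.inl c)

abbrev vPath (v : {v // v ∈ V}) (i : Fin (L + 1)) : EccVert d L U V := .inr (.inr (.inl (v, i)))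

abbrev xPath (i : Fin L) : EccVert d L U V := .inr (.inr (.inr i))

end EccVert

namespace EccEdge

open EccVert

variable {d L : ℕ} {U V : Finset (Fin d → Bool)}

theorem hasWalk_ofU_xPath (u : {u // u ∈ U}) (i : Fin L) :
    hasWalk (EccEdge d L U V) (i + 1) (ofU u) (xPath i) := by
  obtain ⟨i, hi⟩ := i
  induction i with
  | zero => exact hasWalk_one rfl
  | succ i ih => exact hasWalk_add (ih (by omega)) (hasWalk_one rfl)

theorem hasWalk_ofU_ofU (hL : 1 ≤ L) (u u' : {u // u ∈ U}) :
    hasWalk (EccEdge d L U V) (L + 1) (ofU u) (ofU u') := by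
  have hx := hasWalk_ofU_xPath (L := L) (V := V) u ⟨L - 1, by omega⟩
  have hLeq : L - 1 + 1 = L := by omega
  rw [hLeq] at hx
  exact hasWalk_add hx (hasWalk_one rfl)

theorem hasWalk_vPath (v : {v // v ∈ V}) (i : Fin (L + 1)) :
    hasWalk (EccEdge d L U V) i (vPath v 0) (vPath v i) := by
  obtain ⟨i, hi⟩ := i
  induction i with
  | zero => rfl
  | succ i ih => exact hasWalk_add (ih (by omega)) (hasWalk_one ⟨rfl, rfl⟩)

theorem hasWalk_ofU_vPath {u : {u // u ∈ U}} {v : {v // v ∈ V}} {c : Fin d}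
    (hu : u.1 c = true) (hv : v.1 c = true) (i : Fin (L + 1)) :
    hasWalk (EccEdge d L U V) (2 + i) (ofU u) (vPath v i) :=
  hasWalk_add (hasWalk_add (hasWalk_one (b := coord c) hu) (hasWalk_one ⟨hv, rfl⟩))
    (hasWalk_vPath v i)

theorem forall_hasWalk_le_of_forall_not_orthogonal (hL : 1 ≤ L)
    (hcoord : ∀ c : Fin d, ∃ u ∈ U, u c = true) (u : {u // u ∈ U})
    (hu : ∀ v ∈ V, ∃ c : Fin d, u.1 c = true ∧ v c = true) :
    ∀ w, ∃ n ≤ L + 2, hasWalk (EccEdge d L U V) n (ofU u) w := by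
  rintro (u' | c | ⟨v, i⟩ | x)
  · exact ⟨L + 1, by omega, hasWalk_ofU_ofU hL u u'⟩
  · obtain ⟨u', hu', hc⟩ := hcoord c
    exact ⟨L + 1 + 1, le_rfl,
      hasWalk_add (hasWalk_ofU_ofU hL u ⟨u', hu'⟩) (hasWalk_one (b := coord c) hc)⟩
  · obtain ⟨c, huc, hvc⟩ := hu v.1 v.2
    exact ⟨2 + i, by omega, hasWalk_ofU_vPath huc hvc i⟩
  · exact ⟨x + 1, by omega, hasWalk_ofU_xPath u x⟩

def layer : EccVert d L U V → ℕ
  | .inl _ => 0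
  | .inr (.inl _) => 1
  | .inr (.inr (.inl (_, i))) => 2 + i
  | .inr (.inr (.inr _)) => 0

theorem layer_le_of_edge (a b : EccVert d L U V) (h : EccEdge d L U V a b) :
    layer b ≤ layer a + 1 := by
  rcases a with _ | _ | ⟨_, _⟩ | _ <;> rcases b with _ | _ | ⟨_, _⟩ | _ <;>
    simp only [EccEdge, layer] at h ⊢ <;> omega

/-- A lower bound for the distance from `u₀`, valid when `u₀` and `v₀` are orthogonal: the
coordinates off the support of `u₀`, hence also the path of `v₀`, are only reached by way of
another vertex of `U`. -/
def orthPotential (u₀ v₀ : Fin d → Bool) : EccVert d L U V → ℕ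
  | .inl u => if u.1 = u₀ then 0 else L + 1
  | .inr (.inl c) => if u₀ c = true then 1 else L + 2
  | .inr (.inr (.inl (v, i))) => if v.1 = v₀ then L + 3 + i else 0
  | .inr (.inr (.inr x)) => x + 1

theorem orthPotential_le_of_edge {u₀ v₀ : Fin d → Bool}
    (horth : ∀ c : Fin d, ¬(u₀ c = true ∧ v₀ c = true)) (a b : EccVert d L U V)
    (h : EccEdge d L U V a b) : orthPotential u₀ v₀ b ≤ orthPotential u₀ v₀ a + 1 := by
  rcases a with u | c | ⟨v, i⟩ | x <;> rcases b with u' | c' | ⟨v', j⟩ | x' <;>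
    simp only [EccEdge, orthPotential] at h ⊢ <;> (try split_ifs) <;> subst_vars <;>
    first | omega | simp_all

theorem add_two_le_dedist_vPath_last (u : {u // u ∈ U}) (v : {v // v ∈ V}) :
    ((L + 2 : ℕ) : ℕ∞) ≤ dedist (EccEdge d L U V) (ofU u) (vPath v (Fin.last L)) := by
  simpa [layer, add_comm] using
    le_dedist_of_potential layer_le_of_edge (ofU u) (vPath v (Fin.last L))

theorem two_mul_add_three_le_dedist_vPath_last {u : {u // u ∈ U}} {v : {v // v ∈ V}}
    (horth : ∀ c : Fin d, ¬(u.1 c = true ∧ v.1 c = true)) :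
    ((2 * L + 3 : ℕ) : ℕ∞) ≤ dedist (EccEdge d L U V) (ofU u) (vPath v (Fin.last L)) := by
  have := le_dedist_of_potential (orthPotential_le_of_edge horth) (ofU u) (vPath v (Fin.last L))
  simp only [orthPotential, if_pos, Fin.val_last] at this
  exact le_trans (by norm_cast; omega) this

end EccEdge

open EccEdge in
theorem stmt_15_general (d L : ℕ) (hL : 1 ≤ L)
    (U V : Finset (Fin d → Bool)) (hV : V.Nonempty)
    (hcoord : ∀ c : Fin d, ∃ u ∈ U, u c = true)
    (u : {x // x ∈ U}) :
    ((∀ v ∈ V, ∃ c : Fin d, u.1 c = true ∧ v c = true) →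
        (⨆ w : EccVert d L U V, dedist (EccEdge d L U V) (Sum.inl u) w) =
          ((L + 2 : ℕ) : ℕ∞)) ∧
    ((∃ v ∈ V, ∀ c : Fin d, ¬(u.1 c = true ∧ v c = true)) →
        ((2 * L + 3 : ℕ) : ℕ∞) ≤
          ⨆ w : EccVert d L U V, dedist (EccEdge d L U V) (Sum.inl u) w) := by
  refine ⟨fun hu => le_antisymm ?_ ?_, fun ⟨v, hv, horth⟩ => ?_⟩
  · exact outEcc_le_of_forall_hasWalk (forall_hasWalk_le_of_forall_not_orthogonal hL hcoord u hu)
  · obtain ⟨v, hv⟩ := hV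
    exact (add_two_le_dedist_vPath_last u ⟨v, hv⟩).trans (dedist_le_outEcc _ _)
  · exact (two_mul_add_three_le_dedist_vPath_last (v := ⟨v, hv⟩) horth).trans
      (dedist_le_outEcc _ _)

/-- In the directed eccentricity lower-bound graph: if `u ∈ U` is not
orthogonal to any `v ∈ V` then the out-eccentricity of `u` is exactly `L + 2`;
if `u` is orthogonal to some `v ∈ V` then it is at least `2L + 3`. -/
theorem stmt_15 (d L : ℕ) (hL : 1 ≤ L)
    (U V : Finset (Fin d → Bool)) (hU : U.Nonempty) (hV : V.Nonempty)
    (hcoord : ∀ c : Fin d, ∃ u ∈ U, u c = true)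
    (hVreach : ∀ v ∈ V, ∃ u ∈ U, ∃ c : Fin d, u c = true ∧ v c = true)
    (u : {x // x ∈ U}) :
    ((∀ v ∈ V, ∃ c : Fin d, u.1 c = true ∧ v c = true) →
        (⨆ w : EccVert d L U V, dedist (EccEdge d L U V) (Sum.inl u) w) =
          ((L + 2 : ℕ) : ℕ∞)) ∧
    ((∃ v ∈ V, ∀ c : Fin d, ¬(u.1 c = true ∧ v c = true)) →
        ((2 * L + 3 : ℕ) : ℕ∞) ≤
          ⨆ w : EccVert d L U V, dedist (EccEdge d L U V) (Sum.inl u) w) :=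
  stmt_15_general d L hL U V hV hcoord u
end

section
/- In the S-T diameter lower-bound graph built from a k-OV instance, consider the middle-layer claim: for every coordinate tuple x̄ = (x_0,...,x_t), every vertex (a_0,...,a_{t−1}, x̄) ∈ L_1 is at distance exactly t from every vertex (b_2,...,b_{t+1}, x̄) ∈ L_{t+1} (sharing the same x̄), via the canonical forgetting path through L_2,...,L_t. -/
/-- A vertex of one of the middle layers `L_1, …, L_{t+1}` of the `k`-OV
(`k = t+2`) lower-bound graph: a layer index `i` with `1 ≤ i ≤ t+1`, a vector
from `W j` for each index `j` present in layer `i` (namely `j ≤ t−i`, the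
"a-side", or `j ≥ t+3−i`, the "b-side"), and a coordinate tuple
`x̄ ∈ [d]^{t+1}`. -/
structure MidVert (t d : ℕ) (W : Fin (t + 2) → Finset (Fin d → Bool)) where
  i : ℕ
  hi1 : 1 ≤ i
  hi2 : i ≤ t + 1
  f : ∀ j : Fin (t + 2), ((j : ℕ) + i ≤ t ∨ t + 3 ≤ (j : ℕ) + i) → {w // w ∈ W j}
  x : Fin (t + 1) → Fin d

/-- The "forget and replace" relation between consecutive middle layers: a
vertex of layer `i` is joined to a vertex of layer `i+1` with the same
coordinate tuple `x̄` that agrees with it on every index present in both. -/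
def midRel (t d : ℕ) (W : Fin (t + 2) → Finset (Fin d → Bool)) :
    MidVert t d W → MidVert t d W → Prop := fun p q =>
  q.i = p.i + 1 ∧ q.x = p.x ∧
    ∀ (j : Fin (t + 2)) (h1 : (j : ℕ) + p.i ≤ t ∨ t + 3 ≤ (j : ℕ) + p.i)
      (h2 : (j : ℕ) + q.i ≤ t ∨ t + 3 ≤ (j : ℕ) + q.i), p.f j h1 = q.f j h2

/-!
Moving from layer `i` to layer `i + 1` forgets one `a`-vector and adds one `b`-vector, so between
two vertices with the same `x̄` one walks from `u` to `v` through the vertices that take their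
`a`-side from `u` and their `b`-side from `v`, one layer per step. Conversely every edge changes
the layer index by exactly one, so no walk can be shorter than the difference of the layers.
-/

namespace MidVert

variable {t d : ℕ} {W : Fin (t + 2) → Finset (Fin d → Bool)}

lemma ext {p q : MidVert t d W} (hi : p.i = q.i) (hx : p.x = q.x)
    (hf : ∀ (j : Fin (t + 2)) (h1 : (j : ℕ) + p.i ≤ t ∨ t + 3 ≤ (j : ℕ) + p.i)
      (h2 : (j : ℕ) + q.i ≤ t ∨ t + 3 ≤ (j : ℕ) + q.i), p.f j h1 = q.f j h2) :
    p = q := by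
  cases p
  cases q
  dsimp only at hi hx hf
  subst hi hx
  congr
  funext j h
  exact hf j h h

def interp (u v : MidVert t d W) (m : ℕ) (hum : u.i ≤ m) (hmv : m ≤ v.i) : MidVert t d W where
  i := m
  hi1 := u.hi1.trans hum
  hi2 := hmv.trans v.hi2
  f j h :=
    if hj : (j : ℕ) + m ≤ t then u.f j (Or.inl (by omega))
    else v.f j (Or.inr (by have := h.resolve_left hj; omega))
  x := u.x

lemma midRel_interp_succ (u v : MidVert t d W) (m : ℕ) (hum : u.i ≤ m) (hmv : m + 1 ≤ v.i) :
    midRel t d W (interp u v m hum (by omega)) (interp u v (m + 1) (by omega) hmv) := by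
  refine ⟨rfl, rfl, fun j h1 h2 => ?_⟩
  dsimp only [interp] at h1 h2 ⊢
  split_ifs with hj hj' hj'
  · rfl
  · exact absurd (h2.resolve_left hj') (by omega)
  · exact absurd (h1.resolve_left hj) (by omega)
  · rfl

lemma exists_walk_interp (u v : MidVert t d W) (m : ℕ) (hum : u.i ≤ m) (n : ℕ) (hmn : m ≤ n)
    (hnv : n ≤ v.i) :
    ∃ w : (SimpleGraph.fromRel (midRel t d W)).Walk
      (interp u v m hum (hmn.trans hnv)) (interp u v n (hum.trans hmn) hnv),
      w.length = n - m := by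
  induction n, hmn using Nat.le_induction with
  | base => exact ⟨.nil, by simp⟩
  | succ n hmn ih =>
    obtain ⟨w, hw⟩ := ih (by omega)
    have hadj : (SimpleGraph.fromRel (midRel t d W)).Adj
        (interp u v n (hum.trans hmn) (by omega)) (interp u v (n + 1) (by omega) hnv) := by
      refine SimpleGraph.fromRel_adj _ _ _ |>.mpr
        ⟨fun h => ?_, .inl (midRel_interp_succ u v n _ hnv)⟩
      simpa [interp] using congrArg MidVert.i h
    exact ⟨w.concat hadj, by rw [SimpleGraph.Walk.length_concat, hw]; omega⟩

lemma le_i_add_length {p q : MidVert t d W} (w : (SimpleGraph.fromRel (midRel t d W)).Walk p q) :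
    q.i ≤ p.i + w.length := by
  induction w with
  | nil => simp
  | @cons a b c h w ih =>
    have hb : b.i ≤ a.i + 1 := by
      rcases (SimpleGraph.fromRel_adj _ _ _ |>.mp h).2 with h' | h' <;> have := h'.1 <;> omega
    rw [SimpleGraph.Walk.length_cons]
    omega

/-- `ha` and `hb` ask for agreement on the indices that are `a`-indices, resp. `b`-indices, of
both vertices. -/
theorem dist_eq_sub (u v : MidVert t d W) (huv : u.i ≤ v.i) (hx : u.x = v.x)
    (ha : ∀ (j : Fin (t + 2)) h1 h2, (j : ℕ) + v.i ≤ t → u.f j h1 = v.f j h2)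
    (hb : ∀ (j : Fin (t + 2)) h1 h2, t + 3 ≤ (j : ℕ) + u.i → u.f j h1 = v.f j h2) :
    (SimpleGraph.fromRel (midRel t d W)).dist u v = v.i - u.i := by
  have hu : interp u v u.i le_rfl huv = u := by
    refine ext rfl rfl fun j h1 h2 => ?_
    dsimp only [interp] at h1 ⊢
    split_ifs with hj
    · rfl
    · exact (hb j h2 _ (h1.resolve_left hj)).symm
  have hv : interp u v v.i huv le_rfl = v := by
    refine ext rfl hx fun j h1 h2 => ?_
    dsimp only [interp] at h1 ⊢
    split_ifs with hj
    · exact ha j _ h2 hj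
    · rfl
  obtain ⟨w, hw⟩ := exists_walk_interp u v u.i le_rfl v.i huv le_rfl
  have hle := SimpleGraph.dist_le (w.copy hu hv)
  obtain ⟨w', hw'⟩ := SimpleGraph.Reachable.exists_walk_length_eq_dist ⟨w.copy hu hv⟩
  have hge := le_i_add_length w'
  rw [SimpleGraph.Walk.length_copy] at hle
  omega

end MidVert

/-- Middle-layer claim: every vertex of `L_1` is at distance exactly `t` from
every vertex of `L_{t+1}` sharing the same coordinate tuple `x̄`, via the
canonical forgetting path through `L_2, …, L_t`. -/
theorem stmt_16 (t d : ℕ) (W : Fin (t + 2) → Finset (Fin d → Bool))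
    (u v : MidVert t d W) (hu : u.i = 1) (hv : v.i = t + 1) (hx : u.x = v.x) :
    (SimpleGraph.fromRel (midRel t d W)).dist u v = t := by
  rw [MidVert.dist_eq_sub u v (by omega) hx (fun j _ _ hj => by omega)
    (fun j _ _ hj => by have := j.isLt; omega)]
  omega
end

section
/- In the equivalence reduction from S-T Diameter to Diameter: if G' is obtained from graph G by adding, for each s_i ∈ S, a pendant vertex v_i connected to s_i by an edge of weight W where W > M·n exceeds the maximum possible distance in G, then the diameter of the resulting graph equals 2W + max_{s_i, s_j ∈ S} d_G(s_i, s_j). -/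
open scoped ENNReal

/-- Cost of a walk `a :: l` in a weighted graph with weight function `w`
(where `w a b = ⊤` means no edge). -/
noncomputable def walkCost {α : Type*} (w : α → α → ℕ∞) : α → List α → ℕ∞
  | _, [] => 0
  | a, b :: l => w a b + walkCost w b l

/-- Shortest-path distance in a weighted graph given by the weight function
`w` (`⊤` if unreachable). -/
noncomputable def ewdist {α : Type*} (w : α → α → ℕ∞) (u v : α) : ℕ∞ :=
  ⨅ (l : List α) (_ : l.getLastD u = v), walkCost w u l

/-- The augmented graph `G_S`: for each `i`, a pendant vertex `v_i` joined to
`s i` by an edge of weight `Wt`; all other new pairs are non-adjacent. -/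
noncomputable def wS {V : Type*} [DecidableEq V] (wG : V → V → ℕ∞) {k : ℕ}
    (s : Fin k → V) (Wt : ℕ) : (V ⊕ Fin k) → (V ⊕ Fin k) → ℕ∞ := fun a b =>
  match a, b with
  | .inl a, .inl b => wG a b
  | .inl a, .inr i => if a = s i then (Wt : ℕ∞) else ⊤
  | .inr i, .inl a => if a = s i then (Wt : ℕ∞) else ⊤
  | .inr _, .inr _ => ⊤

/-!
The distances in `G_S` are explicit: `d_G(u, v)` between old vertices, `W + d_G(u, s_j)` from an
old vertex to the pendant `v_j`, and `2W + d_G(s_i, s_j)` between distinct pendants. Concrete walks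
give these as upper bounds; conversely the formula vanishes on the diagonal and satisfies the
Bellman inequalities `f a c ≤ w a b + f b c`, and every such `f` lies below the shortest-path
distance. Since all distances of `G` are below `W`, the diameter is attained between two distinct
pendants, which exist because `k ≥ 2`.
-/

section Walk

variable {α : Type*} (w : α → α → ℕ∞)

theorem walkCost_append (a : α) (l₁ l₂ : List α) :
    walkCost w a (l₁ ++ l₂) = walkCost w a l₁ + walkCost w (l₁.getLastD a) l₂ := by
  induction l₁ generalizing a with
  | nil => simp [walkCost]
  | cons b l ih => rw [List.cons_append, walkCost, walkCost, ih, List.getLastD_cons, add_assoc]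

theorem ewdist_le_walkCost {u v : α} {l : List α} (h : l.getLastD u = v) :
    ewdist w u v ≤ walkCost w u l :=
  iInf₂_le l h

@[simp]
theorem ewdist_self (u : α) : ewdist w u u = 0 :=
  nonpos_iff_eq_zero.1 (ewdist_le_walkCost w (l := []) rfl)

theorem ewdist_le_weight (u v : α) : ewdist w u v ≤ w u v := by
  simpa [walkCost] using ewdist_le_walkCost w (l := [v]) rfl

theorem exists_walkCost_eq_ewdist (u v : α) :
    ∃ l : List α, l.getLastD u = v ∧ walkCost w u l = ewdist w u v := by
  have : Nonempty {l : List α // l.getLastD u = v} := ⟨⟨[v], rfl⟩⟩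
  obtain ⟨⟨l, hl⟩, hc⟩ :=
    ENat.exists_eq_iInf fun l : {l : List α // l.getLastD u = v} ↦ walkCost w u l
  exact ⟨l, hl, by rw [hc, ewdist, iInf_subtype']⟩

theorem ewdist_triangle (u x v : α) : ewdist w u v ≤ ewdist w u x + ewdist w x v := by
  obtain ⟨l₁, hl₁, hc₁⟩ := exists_walkCost_eq_ewdist w u x
  obtain ⟨l₂, hl₂, hc₂⟩ := exists_walkCost_eq_ewdist w x v
  calc ewdist w u v ≤ walkCost w u (l₁ ++ l₂) := ewdist_le_walkCost w (by simp_all)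
    _ = ewdist w u x + ewdist w x v := by rw [walkCost_append, hl₁, hc₁, hc₂]

theorem ewdist_le_weight_add (u v x : α) : ewdist w u x ≤ w u v + ewdist w v x :=
  (ewdist_triangle w u v x).trans (by gcongr; exact ewdist_le_weight w u v)

theorem ewdist_le_add_weight (u v x : α) : ewdist w u x ≤ ewdist w u v + w v x :=
  (ewdist_triangle w u v x).trans (by gcongr; exact ewdist_le_weight w v x)

theorem le_ewdist_of_le_weight_add (f : α → α → ℕ∞) (hf₀ : ∀ a, f a a = 0)
    (hf : ∀ a b c, f a c ≤ w a b + f b c) (u v : α) : f u v ≤ ewdist w u v := by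
  suffices ∀ l : List α, ∀ a, f a (l.getLastD a) ≤ walkCost w a l from
    le_iInf₂ fun l hl ↦ hl ▸ this l u
  intro l
  induction l with
  | nil => simp [hf₀]
  | cons b l ih =>
    intro a
    rw [List.getLastD_cons, walkCost]
    exact (hf a b _).trans (by gcongr; exact ih b)

theorem ewdist_map_le {β : Type*} (w' : β → β → ℕ∞) (g : α → β)
    (hg : ∀ a b, w' (g a) (g b) ≤ w a b) (u v : α) :
    ewdist w' (g u) (g v) ≤ ewdist w u v := by
  have hcost : ∀ l a, walkCost w' (g a) (l.map g) ≤ walkCost w a l := by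
    intro l
    induction l with
    | nil => simp [walkCost]
    | cons b l ih => intro a; exact add_le_add (hg a b) (ih b)
  exact le_iInf₂ fun l hl ↦
    (ewdist_le_walkCost w' (by rw [List.getLastD_map, hl])).trans (hcost l u)

end Walk

section Augmented

variable {V : Type*} (wG : V → V → ℕ∞) {k : ℕ} (s : Fin k → V) (Wt : ℕ)

noncomputable def wSDist : V ⊕ Fin k → V ⊕ Fin k → ℕ∞
  | .inl u, .inl v => ewdist wG u v
  | .inl u, .inr j => Wt + ewdist wG u (s j)
  | .inr i, .inl v => Wt + ewdist wG (s i) v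
  | .inr i, .inr j => if i = j then 0 else 2 * Wt + ewdist wG (s i) (s j)

theorem wSDist_self (a : V ⊕ Fin k) : wSDist wG s Wt a a = 0 := by
  rcases a with u | i <;> simp [wSDist]

theorem wSDist_le_two_mul_add {D : ℕ∞} (hdiam : ∀ u v, ewdist wG u v ≤ Wt)
    (hD : ∀ i j, ewdist wG (s i) (s j) ≤ D) (a b : V ⊕ Fin k) :
    wSDist wG s Wt a b ≤ 2 * Wt + D := by
  have hWt : (Wt : ℕ∞) ≤ 2 * Wt := by rw [two_mul]; exact le_self_add
  rcases a with u | i <;> rcases b with v | j <;> simp only [wSDist]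
  · exact ((hdiam u v).trans hWt).trans le_self_add
  · rw [two_mul, add_assoc]
    gcongr
    exact (hdiam u (s j)).trans le_self_add
  · rw [two_mul, add_assoc]
    gcongr
    exact (hdiam (s i) v).trans le_self_add
  · split_ifs
    · exact zero_le
    · gcongr
      exact hD i j

variable [DecidableEq V]

theorem wSDist_le_wS_add (a b c : V ⊕ Fin k) :
    wSDist wG s Wt a c ≤ wS wG s Wt a b + wSDist wG s Wt b c := by
  rcases a with u | i <;> rcases b with v | j <;> rcases c with x | m <;>
    simp only [wSDist, wS] <;> (try split_ifs) <;> subst_vars <;> try simp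
  · exact ewdist_le_weight_add wG u v x
  · rw [add_left_comm]
    gcongr
    exact ewdist_le_weight_add wG u v (s m)
  · exact le_add_self.trans le_add_self
  · rw [two_mul, add_assoc]

theorem ewdist_wS_inl_inl_le (u v : V) :
    ewdist (wS wG s Wt) (.inl u) (.inl v) ≤ ewdist wG u v :=
  ewdist_map_le wG _ Sum.inl (fun _ _ ↦ le_rfl) u v

theorem ewdist_wS_inl_inr_le (u : V) (j : Fin k) :
    ewdist (wS wG s Wt) (.inl u) (.inr j) ≤ Wt + ewdist wG u (s j) := by
  calc ewdist (wS wG s Wt) (.inl u) (.inr j)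
      ≤ ewdist (wS wG s Wt) (.inl u) (.inl (s j)) + wS wG s Wt (.inl (s j)) (.inr j) :=
        ewdist_le_add_weight _ _ _ _
    _ ≤ ewdist wG u (s j) + Wt := by
        gcongr
        · exact ewdist_wS_inl_inl_le wG s Wt u (s j)
        · simp [wS]
    _ = Wt + ewdist wG u (s j) := add_comm _ _

theorem ewdist_wS_inr_inl_le (i : Fin k) (v : V) :
    ewdist (wS wG s Wt) (.inr i) (.inl v) ≤ Wt + ewdist wG (s i) v := by
  calc ewdist (wS wG s Wt) (.inr i) (.inl v)
      ≤ wS wG s Wt (.inr i) (.inl (s i)) + ewdist (wS wG s Wt) (.inl (s i)) (.inl v) :=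
        ewdist_le_weight_add _ _ _ _
    _ ≤ Wt + ewdist wG (s i) v := by
        gcongr
        · simp [wS]
        · exact ewdist_wS_inl_inl_le wG s Wt (s i) v

theorem ewdist_wS_le_wSDist (a b : V ⊕ Fin k) :
    ewdist (wS wG s Wt) a b ≤ wSDist wG s Wt a b := by
  rcases a with u | i <;> rcases b with v | j
  · exact ewdist_wS_inl_inl_le wG s Wt u v
  · exact ewdist_wS_inl_inr_le wG s Wt u j
  · exact ewdist_wS_inr_inl_le wG s Wt i v
  · simp only [wSDist]
    split_ifs with hij
    · simp [hij]
    calc ewdist (wS wG s Wt) (.inr i) (.inr j)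
        ≤ ewdist (wS wG s Wt) (.inr i) (.inl (s i)) + ewdist (wS wG s Wt) (.inl (s i)) (.inr j) :=
          ewdist_triangle _ _ _ _
      _ ≤ (Wt + ewdist wG (s i) (s i)) + (Wt + ewdist wG (s i) (s j)) :=
          add_le_add (ewdist_wS_inr_inl_le wG s Wt i (s i)) (ewdist_wS_inl_inr_le wG s Wt (s i) j)
      _ = 2 * Wt + ewdist wG (s i) (s j) := by rw [ewdist_self, add_zero, two_mul, add_assoc]

theorem ewdist_wS_eq_wSDist (a b : V ⊕ Fin k) :
    ewdist (wS wG s Wt) a b = wSDist wG s Wt a b :=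
  (ewdist_wS_le_wSDist wG s Wt a b).antisymm
    (le_ewdist_of_le_weight_add _ _ (wSDist_self wG s Wt) (wSDist_le_wS_add wG s Wt) a b)

theorem ewdist_wS_inr_inr_of_ne {i j : Fin k} (hij : i ≠ j) :
    ewdist (wS wG s Wt) (.inr i) (.inr j) = 2 * Wt + ewdist wG (s i) (s j) := by
  simp [ewdist_wS_eq_wSDist, wSDist, hij]

end Augmented

theorem stmt_17_general {V : Type*} [DecidableEq V] (k : ℕ) (hk : 2 ≤ k)
    (wG : V → V → ℕ∞)
    (s : Fin k → V) (Wt : ℕ)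
    (hdiam : ∀ a b : V, ewdist wG a b < (Wt : ℕ∞)) :
    (⨆ p : (V ⊕ Fin k) × (V ⊕ Fin k), ewdist (wS wG s Wt) p.1 p.2) =
      2 * (Wt : ℕ∞) + ⨆ p : Fin k × Fin k, ewdist wG (s p.1) (s p.2) := by
  have : Nontrivial (Fin k) := Fin.nontrivial_iff_two_le.2 hk
  have hle_pendant (i j : Fin k) (hij : i ≠ j) : 2 * (Wt : ℕ∞) + ewdist wG (s i) (s j) ≤
      ⨆ p : (V ⊕ Fin k) × (V ⊕ Fin k), ewdist (wS wG s Wt) p.1 p.2 :=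
    (ewdist_wS_inr_inr_of_ne wG s Wt hij).symm.trans_le
      (le_iSup (fun p : (V ⊕ Fin k) × (V ⊕ Fin k) ↦ ewdist (wS wG s Wt) p.1 p.2) (.inr i, .inr j))
  refine le_antisymm (iSup_le fun ⟨a, b⟩ ↦ ?_) ?_
  · rw [ewdist_wS_eq_wSDist]
    exact wSDist_le_two_mul_add wG s Wt (fun u v ↦ (hdiam u v).le)
      (fun i j ↦ le_iSup (fun p : Fin k × Fin k ↦ ewdist wG (s p.1) (s p.2)) (i, j)) a b
  · rw [ENat.add_iSup]
    refine iSup_le fun ⟨i, j⟩ ↦ ?_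
    obtain rfl | hij := eq_or_ne i j
    · obtain ⟨j, hj⟩ := exists_ne i
      simpa using le_self_add.trans (hle_pendant i j hj.symm)
    · exact hle_pendant i j hij

/-- If `G` is a connected undirected weighted graph, `S = {s_1, …, s_k}`, and
`Wt` exceeds every distance in `G`, then the diameter of the augmented graph
`G_S` equals `2·Wt + max_{s_i,s_j ∈ S} d_G(s_i, s_j)`. -/
theorem stmt_17 {V : Type*} [Fintype V] [DecidableEq V] (k : ℕ) (hk : 2 ≤ k)
    (wG : V → V → ℕ∞) (hsym : ∀ a b : V, wG a b = wG b a)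
    (s : Fin k → V) (Wt : ℕ) (hWt : 0 < Wt)
    (hdiam : ∀ a b : V, ewdist wG a b < (Wt : ℕ∞)) :
    (⨆ p : (V ⊕ Fin k) × (V ⊕ Fin k), ewdist (wS wG s Wt) p.1 p.2) =
      2 * (Wt : ℕ∞) + ⨆ p : Fin k × Fin k, ewdist wG (s p.1) (s p.2) :=
  stmt_17_general k hk wG s Wt hdiam
end
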